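/- arXiv:1710.09963 — 3 statements merged into one kernel-verified Lean document; each statement's English description precedes it below -/
import Mathlib

section
/- Let u ∈ ℂ satisfy u² + u + 1 = 0, and let A = [[1,1],[0,1]], B = [[1,0],[−u,1]] in SL(2,ℂ). Then over the field ℂ(t), det( I − t⁻¹·AB⁻¹A⁻¹ + AB⁻¹A⁻¹B − t·B + BAB⁻¹A⁻¹ ) = t⁻²(t−1)²(t² − 4t + 1). -/
/-!
The generators lie in `SL(2)`, so their inverses are their adjugates and the matrix in question
has explicit entries in `ℤ[v, t, t⁻¹]`. Its determinant differs from `t⁻²(t - 1)²(t² - 4t + 1)`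
by the constant `v⁴ + v² + 1 = (v² + v + 1)(v² - v + 1)`, which vanishes when `v² + v + 1 = 0`.
-/

open Matrix

theorem Matrix.inv_fin_two_of_det_eq_one {R : Type*} [CommRing R] {a b c d : R}
    (h : a * d - b * c = 1) : (!![a, b; c, d])⁻¹ = !![d, -b; -c, a] := by
  rw [inv_def, det_fin_two_of, h, Ring.inverse_one, one_smul, adjugate_fin_two_of]

section FigureEight

variable {K : Type*} [Field K] {v t : K}

theorem figureEight_foxMatrix_eq :
    letI A : Matrix (Fin 2) (Fin 2) K := !![1, 1; 0, 1]
    letI B : Matrix (Fin 2) (Fin 2) K := !![1, 0; -v, 1]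
    1 - t⁻¹ • (A * B⁻¹ * A⁻¹) + A * B⁻¹ * A⁻¹ * B - t • B + B * A * B⁻¹ * A⁻¹ =
      !![3 + 2 * v + v ^ 2 - t - t⁻¹ * (1 + v), v * (t⁻¹ - 2);
        v * (t - t⁻¹), 3 - 2 * v + v ^ 2 - t - t⁻¹ * (1 - v)] := by
  have hA_inv : (!![1, 1; 0, 1] : Matrix (Fin 2) (Fin 2) K)⁻¹ = !![1, -1; 0, 1] := by
    rw [inv_fin_two_of_det_eq_one (by ring)]; simp
  have hB_inv : (!![1, 0; -v, 1] : Matrix (Fin 2) (Fin 2) K)⁻¹ = !![1, 0; v, 1] := by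
    rw [inv_fin_two_of_det_eq_one (by ring)]; simp
  simp only [hA_inv, hB_inv, one_fin_two, mul_fin_two, smul_of, smul_cons, smul_empty, smul_eq_mul]
  ext i j
  fin_cases i <;> fin_cases j <;> simp <;> ring

theorem figureEight_foxMatrix_det (hv : v ^ 2 + v + 1 = 0) (ht : t ≠ 0) :
    (!![3 + 2 * v + v ^ 2 - t - t⁻¹ * (1 + v), v * (t⁻¹ - 2);
        v * (t - t⁻¹), 3 - 2 * v + v ^ 2 - t - t⁻¹ * (1 - v)]).det =
      (t ^ 2)⁻¹ * (t - 1) ^ 2 * (t ^ 2 - 4 * t + 1) := by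
  rw [det_fin_two_of]
  field_simp
  linear_combination t ^ 2 * (v ^ 2 - v + 1) * hv

end FigureEight

/-- Let `u ∈ ℂ` with `u² + u + 1 = 0`, and `A = [[1,1],[0,1]]`, `B = [[1,0],[-u,1]]`
regarded in `SL(2, ℂ(t))`. Then over `ℂ(t)`,
`det(I - t⁻¹ A B⁻¹ A⁻¹ + A B⁻¹ A⁻¹ B - t B + B A B⁻¹ A⁻¹) = t⁻² (t-1)² (t² - 4t + 1)`. -/
theorem stmt7 (u : ℂ) (hu : u ^ 2 + u + 1 = 0)
    (A B : Matrix (Fin 2) (Fin 2) (RatFunc ℂ))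
    (hA : A = !![1, 1; 0, 1])
    (hB : B = !![1, 0; -(algebraMap ℂ (RatFunc ℂ) u), 1])
    (t : RatFunc ℂ) (ht : t = RatFunc.X) :
    (1 - t⁻¹ • (A * B⁻¹ * A⁻¹) + A * B⁻¹ * A⁻¹ * B - t • B + B * A * B⁻¹ * A⁻¹).det =
      (t ^ 2)⁻¹ * (t - 1) ^ 2 * (t ^ 2 - 4 * t + 1) := by
  subst hA hB ht
  have hv : algebraMap ℂ (RatFunc ℂ) u ^ 2 + algebraMap ℂ (RatFunc ℂ) u + 1 = 0 := by
    simpa using congrArg (algebraMap ℂ (RatFunc ℂ)) hu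
  exact (congrArg det figureEight_foxMatrix_eq).trans
    (figureEight_foxMatrix_det hv RatFunc.X_ne_zero)
end

section
/- Let 0 → C'_* → C_* → C''_* → 0 be a short exact sequence of finite-dimensional based chain complexes over a field, with compatible bases, where all three complexes are acyclic. Then Tor(C_*) = Tor(C'_*)·Tor(C''_*) up to sign. -/
open Finset

variable {F : Type} [Field F]

/-- The chain-complex condition `d ∘ d = 0` for a complex `⋯ → M (i+1) →^{d i} M i → ⋯`. -/
def IsChainComplex {M : ℕ → Type} [∀ i, AddCommGroup (M i)] [∀ i, Module F (M i)]
    (d : ∀ i, M (i + 1) →ₗ[F] M i) : Prop :=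
  ∀ i, (d i).comp (d (i + 1)) = 0

/-- Acyclicity of the chain complex `⋯ → M (i+1) →^{d i} M i → ⋯ → M 0 → 0`:
`H_0 = M 0 / im (d 0) = 0` and `H_{i+1} = ker (d i) / im (d (i+1)) = 0`. -/
def IsAcyclic {M : ℕ → Type} [∀ i, AddCommGroup (M i)] [∀ i, Module F (M i)]
    (d : ∀ i, M (i + 1) →ₗ[F] M i) : Prop :=
  LinearMap.range (d 0) = ⊤ ∧ ∀ i, LinearMap.ker (d i) = LinearMap.range (d (i + 1))

/-- A valid choice of the sets `b^{i+1} ⊂ C_{i+1}` in the definition of Reidemeister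
torsion: `b i : Fin (r i) → M (i+1)` is a family of vectors whose boundaries
`d i (b i x)` form a basis of `im (d i) ⊆ M i`. -/
def IsTorsionChoice {M : ℕ → Type} [∀ i, AddCommGroup (M i)] [∀ i, Module F (M i)]
    {r : ℕ → ℕ} (d : ∀ i, M (i + 1) →ₗ[F] M i) (b : ∀ i, Fin (r i) → M (i + 1)) : Prop :=
  ∀ i, LinearIndependent F (fun x => d i (b i x)) ∧
    Submodule.span F (Set.range fun x => d i (b i x)) = LinearMap.range (d i)

/-- The factor `[d_{i+1}(b^{i+1}) b^i / c^i]`: the determinant, with respect to the given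
basis `c i` of `C_i`, of the family consisting of the boundaries `d_i(b^i)` (for `i = 0`)
resp. `d_{i+1}(b^{i+1})` together with `b^i` (for `i ≥ 1`).  It is set to `0` if the
cardinalities do not match (which never happens for an acyclic complex with a valid
choice). -/
noncomputable def chainDet {M : ℕ → Type} [∀ i, AddCommGroup (M i)] [∀ i, Module F (M i)]
    {k r : ℕ → ℕ} (c : ∀ i, Module.Basis (Fin (k i)) F (M i))
    (d : ∀ i, M (i + 1) →ₗ[F] M i) (b : ∀ i, Fin (r i) → M (i + 1)) : ℕ → F
  | 0 =>
    if h : r 0 = k 0 then (c 0).det fun j => d 0 (b 0 (Fin.cast h.symm j)) else 0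
  | (i + 1) =>
    if h : r (i + 1) + r i = k (i + 1) then
      (c (i + 1)).det fun j =>
        Sum.elim (fun x => d (i + 1) (b (i + 1) x)) (b i)
          (finSumFinEquiv.symm (Fin.cast h.symm j))
    else 0

/-- The Reidemeister torsion `∏_{i=0}^{N} [d_{i+1}(b^{i+1}) b^i / c^i]^{(-1)^{i+1}}` of a
based acyclic chain complex of length `N`. -/
noncomputable def torsion {M : ℕ → Type} [∀ i, AddCommGroup (M i)] [∀ i, Module F (M i)]
    {k r : ℕ → ℕ} (c : ∀ i, Module.Basis (Fin (k i)) F (M i))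
    (d : ∀ i, M (i + 1) →ₗ[F] M i) (b : ∀ i, Fin (r i) → M (i + 1)) (N : ℕ) : F :=
  ∏ i ∈ Finset.range (N + 1), chainDet c d b i ^ ((-1 : ℤ) ^ (i + 1))

/-!
Changing the choice `b` to `b₂` multiplies the `i`-th factor by the change-of-basis determinants
`a (i+1) * a i` of the boundary spaces `im d`, so the alternating product telescopes to
`a N ^ ±1`, and `a N = 1` because `im d_N = 0`. Torsion is therefore independent of `b`, and in
the middle complex we may use the lifts `(f b', s b'')` of the choices of `C'` and `C''`; they
are valid because the sequence of boundary spaces `0 → B' → B → B'' → 0` is again exact. With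
these choices, and relative to the basis `(f c', s c'')` of determinant `1`, the matrix of each
factor of `C` is, after reordering its columns, block upper triangular with the corresponding
factors of `C'` and `C''` on the diagonal; the reordering costs only a sign.
-/

open Module

def EqUpToSign (a b : F) : Prop := a = b ∨ a = -b

namespace EqUpToSign

theorem refl (a : F) : EqUpToSign a a := Or.inl rfl

theorem mul {a b a' b' : F} (h : EqUpToSign a b) (h' : EqUpToSign a' b') :
    EqUpToSign (a * a') (b * b') := by
  rcases h with rfl | rfl <;> rcases h' with rfl | rfl <;> simp [EqUpToSign]

theorem zpow {a b : F} (h : EqUpToSign a b) (n : ℤ) : EqUpToSign (a ^ n) (b ^ n) := by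
  rcases h with rfl | rfl
  · exact refl _
  · rcases n.even_or_odd with hn | hn
    · exact Or.inl (hn.neg_zpow b)
    · exact Or.inr (hn.neg_zpow b)

theorem prod {ι : Type*} (s : Finset ι) {a b : ι → F} (h : ∀ i ∈ s, EqUpToSign (a i) (b i)) :
    EqUpToSign (∏ i ∈ s, a i) (∏ i ∈ s, b i) := by
  induction s using Finset.cons_induction with
  | empty => exact refl _
  | cons i s hi ih =>
    rw [Finset.prod_cons, Finset.prod_cons]
    exact (h i (Finset.mem_cons_self i s)).mul (ih fun j hj => h j (Finset.mem_cons_of_mem hj))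

end EqUpToSign

theorem prod_range_zpow_neg_one_pow_telescope {G : Type*} [CommGroupWithZero G]
    {a x y : ℕ → G} (ha : ∀ i, a i ≠ 0) (h0 : y 0 = a 0 * x 0)
    (hsucc : ∀ i, y (i + 1) = a (i + 1) * a i * x (i + 1)) (N : ℕ) :
    ∏ i ∈ Finset.range (N + 1), y i ^ ((-1 : ℤ) ^ (i + 1)) =
      a N ^ ((-1 : ℤ) ^ (N + 1)) * ∏ i ∈ Finset.range (N + 1), x i ^ ((-1 : ℤ) ^ (i + 1)) := by
  induction N with
  | zero => rw [Finset.prod_range_one, Finset.prod_range_one, h0, mul_zpow]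
  | succ n ih =>
    rw [Finset.prod_range_succ _ (n + 1), ih, hsucc, Finset.prod_range_succ _ (n + 1), mul_zpow,
      mul_zpow, pow_succ _ (n + 1), mul_neg_one]
    simp only [zpow_neg]
    field_simp [zpow_ne_zero _ (ha n)]

section LinearAlgebra

variable {V V' V'' : Type*} [AddCommGroup V] [Module F V] [AddCommGroup V'] [Module F V']
  [AddCommGroup V''] [Module F V'']

theorem Module.Basis.det_eq_det_mul_det {ι : Type*} [Fintype ι] [DecidableEq ι]
    (c B : Basis ι F V) (v : ι → V) :
    c.det v = c.det B * B.det v := by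
  conv_lhs => rw [c.det.eq_smul_basis_det B]
  rfl

theorem Module.Basis.det_comp_equiv_eqUpToSign {ι κ : Type*} [Fintype ι] [DecidableEq ι]
    (c : Basis ι F V) (v : κ → V) (e₁ e₂ : ι ≃ κ) :
    EqUpToSign (c.det (v ∘ e₁)) (c.det (v ∘ e₂)) := by
  have hv : v ∘ e₁ = (v ∘ e₂) ∘ ⇑(e₁.trans e₂.symm) := by
    ext j; simp
  rw [hv, AlternatingMap.map_perm]
  rcases Int.units_eq_one_or (Equiv.Perm.sign (e₁.trans e₂.symm)) with h | h <;>
    simp [h, EqUpToSign]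

theorem linearIndependent_sumElim_of_comp_eq_zero {ι' ι'' : Type*} {f : V' →ₗ[F] V}
    {g : V →ₗ[F] V''} (hgf : g ∘ₗ f = 0) (hf : Function.Injective f) {u : ι' → V'} {w : ι'' → V}
    (hu : LinearIndependent F u) (hw : LinearIndependent F (g ∘ w)) :
    LinearIndependent F (Sum.elim (f ∘ u) w) := by
  refine (hu.map' f (LinearMap.ker_eq_bot.mpr hf)).sum_type hw.of_comp
    ((Submodule.range_ker_disjoint hw).symm.mono_left ?_)
  rw [Submodule.span_le]
  rintro _ ⟨a, rfl⟩
  exact LinearMap.congr_fun hgf (u a)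

/-- In a basis adapted to `f` and `g`, the matrix of `(f ∘ u, w)` is block upper triangular. -/
theorem Module.Basis.det_sumElim_eq_mul {ι' ι'' : Type*} [Fintype ι'] [DecidableEq ι']
    [Fintype ι''] [DecidableEq ι''] {f : V' →ₗ[F] V} {g : V →ₗ[F] V''} (hgf : g ∘ₗ f = 0)
    (B : Basis (ι' ⊕ ι'') F V) (c' : Basis ι' F V') (c'' : Basis ι'' F V'')
    (hBl : ∀ a, B (Sum.inl a) = f (c' a)) (hBr : ∀ a, g (B (Sum.inr a)) = c'' a)
    (u : ι' → V') (w : ι'' → V) :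
    B.det (Sum.elim (f ∘ u) w) = c'.det u * c''.det (g ∘ w) := by
  have hgf' : ∀ x, g (f x) = 0 := LinearMap.congr_fun hgf
  have hr : ∀ a, c''.coord a ∘ₗ g = B.coord (Sum.inr a) := fun a => B.ext fun
    | .inl b => by
      simp only [LinearMap.comp_apply, Basis.coord_apply, Basis.repr_self]
      simp [hBl, hgf']
    | .inr b => by simp [hBr, Finsupp.single_apply]
  have hl : ∀ a, B.coord (Sum.inl a) ∘ₗ f = c'.coord a := fun a => c'.ext fun b => by
    simp [← hBl, Finsupp.single_apply]
  have hB : B.toMatrix (Sum.elim (f ∘ u) w) = Matrix.fromBlocks (c'.toMatrix u)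
      (Matrix.of fun a b => B.repr (w b) (Sum.inl a)) 0 (c''.toMatrix (g ∘ w)) := by
    ext (a | a) (b | b)
    · exact LinearMap.congr_fun (hl a) (u b)
    · rfl
    · simpa [Basis.toMatrix_apply, hgf'] using (LinearMap.congr_fun (hr a) (f (u b))).symm
    · exact (LinearMap.congr_fun (hr a) (w b)).symm
  rw [Basis.det_apply, hB, Matrix.det_fromBlocks_zero₂₁, ← Basis.det_apply, ← Basis.det_apply]

theorem Module.Basis.det_sumElim_comp_eq_mul {ι ι' ι'' : Type*} [Fintype ι] [DecidableEq ι]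
    [Fintype ι'] [DecidableEq ι'] [Fintype ι''] [DecidableEq ι''] {f : V' →ₗ[F] V}
    {g : V →ₗ[F] V''} (hgf : g ∘ₗ f = 0) (hf : Function.Injective f) (c : Basis ι F V)
    (c' : Basis ι' F V') (c'' : Basis ι'' F V'') {v : ι'' → V} (hv : g ∘ v = c'')
    (e : ι ≃ ι' ⊕ ι'') (u : ι' → V') (w : ι'' → V) :
    c.det (Sum.elim (f ∘ u) w ∘ e) =
      c.det (Sum.elim (f ∘ c') v ∘ e) * (c'.det u * c''.det (g ∘ w)) := by
  have := Module.Finite.of_basis c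
  have hli : LinearIndependent F (Sum.elim (f ∘ c') v) :=
    linearIndependent_sumElim_of_comp_eq_zero hgf hf c'.linearIndependent
      (hv ▸ c''.linearIndependent)
  let B := basisOfLinearIndependentOfCardEqFinrank' _ hli
    (by rw [← Fintype.card_congr e, finrank_eq_card_basis c])
  have hB : ⇑B = Sum.elim (f ∘ c') v := coe_basisOfLinearIndependentOfCardEqFinrank' _ _ _
  have hBr : ∀ a, g (B (Sum.inr a)) = c'' a := fun a => by
    rw [hB, Sum.elim_inr, ← hv, Function.comp_apply]
  rw [c.det_eq_det_mul_det (B.reindex e.symm), Basis.coe_reindex, Equiv.symm_symm, hB,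
    Basis.det_reindex_symm, B.det_sumElim_eq_mul hgf c' c'' (fun a => by rw [hB]; rfl) hBr]

theorem Module.Basis.det_eqUpToSign_mul_of_section {ι ι' ι'' κ : Type*} [Fintype ι]
    [DecidableEq ι] [Fintype ι'] [DecidableEq ι'] [Fintype ι''] [DecidableEq ι'']
    {f : V' →ₗ[F] V} {g : V →ₗ[F] V''} {s : V'' →ₗ[F] V} (hgf : g ∘ₗ f = 0)
    (hf : Function.Injective f) (hgs : g ∘ₗ s = LinearMap.id) (c : Basis ι F V)
    (c' : Basis ι' F V') (c'' : Basis ι'' F V'') (e : ι ≃ ι' ⊕ ι'')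
    (hc : c.det (Sum.elim (f ∘ c') (s ∘ c'') ∘ e) = 1) (W : κ → V) (e₁ : ι ≃ κ)
    (τ : ι' ⊕ ι'' ≃ κ) (u : ι' → V') (w : ι'' → V) (hW : W ∘ τ = Sum.elim (f ∘ u) w) :
    EqUpToSign (c.det (W ∘ e₁)) (c'.det u * c''.det (g ∘ w)) := by
  have hv : g ∘ (s ∘ c'') = c'' := funext fun a => LinearMap.congr_fun hgs (c'' a)
  have h := c.det_sumElim_comp_eq_mul hgf hf c' c'' hv e u w
  rw [hc, one_mul, ← hW, Function.comp_assoc] at h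
  rw [← h]
  exact c.det_comp_equiv_eqUpToSign W e₁ (e.trans τ)

end LinearAlgebra

section Torsion

variable {M : ℕ → Type} [∀ i, AddCommGroup (M i)] [∀ i, Module F (M i)] {k r : ℕ → ℕ}
  (c : ∀ i, Basis (Fin (k i)) F (M i)) {d : ∀ i, M (i + 1) →ₗ[F] M i}
  {b b₂ : ∀ i, Fin (r i) → M (i + 1)}

noncomputable def rangeBasis (hb : IsTorsionChoice d b) (i : ℕ) :
    Basis (Fin (r i)) F (LinearMap.range (d i)) :=
  (Basis.span (hb i).1).map (LinearEquiv.ofEq _ _ (hb i).2)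

theorem coe_rangeBasis (hb : IsTorsionChoice d b) (i : ℕ) (x : Fin (r i)) :
    (rangeBasis hb i x : M i) = d i (b i x) := by
  simp [rangeBasis, Basis.span_apply]

theorem subtype_comp_rangeBasis (hb : IsTorsionChoice d b) (i : ℕ) :
    (LinearMap.range (d i)).subtype ∘ rangeBasis hb i = d i ∘ b i :=
  funext (coe_rangeBasis hb i)

theorem rangeRestrict_comp_eq_rangeBasis (hb : IsTorsionChoice d b) (i : ℕ) :
    (d i).rangeRestrict ∘ b i = rangeBasis hb i :=
  funext fun x => Subtype.ext (coe_rangeBasis hb i x).symm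

theorem IsTorsionChoice.finrank_range (hb : IsTorsionChoice d b) (i : ℕ) :
    finrank F (LinearMap.range (d i)) = r i := by
  rw [finrank_eq_card_basis (rangeBasis hb i), Fintype.card_fin]

theorem IsAcyclic.rank_zero_eq (hac : IsAcyclic d) (hb : IsTorsionChoice d b)
    (c : ∀ i, Basis (Fin (k i)) F (M i)) : r 0 = k 0 := by
  rw [← hb.finrank_range, hac.1, finrank_top, finrank_eq_card_basis (c 0), Fintype.card_fin]

theorem IsAcyclic.rank_succ_eq (hac : IsAcyclic d) (hb : IsTorsionChoice d b)
    (c : ∀ i, Basis (Fin (k i)) F (M i)) (i : ℕ) :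
    r (i + 1) + r i = k (i + 1) := by
  have := Module.Finite.of_basis (c (i + 1))
  rw [← hb.finrank_range, ← hb.finrank_range, ← hac.2 i, add_comm,
    (d i).finrank_range_add_finrank_ker, finrank_eq_card_basis (c (i + 1)), Fintype.card_fin]

theorem chainDet_zero_of_eq (b : ∀ i, Fin (r i) → M (i + 1)) (h : r 0 = k 0) :
    chainDet c d b 0 = (c 0).det ((d 0 ∘ b 0) ∘ finCongr h.symm) := by
  rw [chainDet, dif_pos h]
  rfl

theorem chainDet_succ_of_eq (b : ∀ i, Fin (r i) → M (i + 1)) (i : ℕ)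
    (h : r (i + 1) + r i = k (i + 1)) :
    chainDet c d b (i + 1) = (c (i + 1)).det
      (Sum.elim (d (i + 1) ∘ b (i + 1)) (b i) ∘ ((finCongr h.symm).trans finSumFinEquiv.symm)) := by
  rw [chainDet, dif_pos h]
  rfl

theorem chainDet_zero_eq_det_mul (hac : IsAcyclic d) (hb : IsTorsionChoice d b)
    (hb₂ : IsTorsionChoice d b₂) :
    chainDet c d b₂ 0 = (rangeBasis hb 0).det (rangeBasis hb₂ 0) * chainDet c d b 0 := by
  have h := hac.rank_zero_eq hb c
  let Z := (rangeBasis hb 0).map (LinearEquiv.ofTop _ hac.1)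
  have hZ : ⇑Z = d 0 ∘ b 0 := funext fun x => coe_rangeBasis hb 0 x
  have hZ₂ : (LinearEquiv.ofTop _ hac.1).symm ∘ (d 0 ∘ b₂ 0) = rangeBasis hb₂ 0 :=
    rangeRestrict_comp_eq_rangeBasis hb₂ 0
  rw [chainDet_zero_of_eq c b₂ h, chainDet_zero_of_eq c b h,
    (c 0).det_eq_det_mul_det (Z.reindex (finCongr h.symm).symm), Basis.coe_reindex,
    Equiv.symm_symm, hZ, Basis.det_reindex_symm, Basis.det_map, hZ₂, mul_comm]

theorem chainDet_succ_eq_det_mul (hcc : IsChainComplex d) (hac : IsAcyclic d)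
    (hb : IsTorsionChoice d b) (hb₂ : IsTorsionChoice d b₂) (i : ℕ) :
    chainDet c d b₂ (i + 1) = (rangeBasis hb (i + 1)).det (rangeBasis hb₂ (i + 1)) *
      (rangeBasis hb i).det (rangeBasis hb₂ i) * chainDet c d b (i + 1) := by
  have h := hac.rank_succ_eq hb c i
  have hgf : (d i).rangeRestrict ∘ₗ (LinearMap.range (d (i + 1))).subtype = 0 :=
    LinearMap.ext fun ⟨_, y, hy⟩ => Subtype.ext <| by
      simpa [← hy] using LinearMap.congr_fun (hcc i) y
  have key := (c (i + 1)).det_sumElim_comp_eq_mul hgf (Submodule.injective_subtype _)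
    (rangeBasis hb (i + 1)) (rangeBasis hb i) (rangeRestrict_comp_eq_rangeBasis hb i)
    ((finCongr h.symm).trans finSumFinEquiv.symm) (rangeBasis hb₂ (i + 1)) (b₂ i)
  rw [subtype_comp_rangeBasis, subtype_comp_rangeBasis, rangeRestrict_comp_eq_rangeBasis hb₂] at key
  rw [chainDet_succ_of_eq c b₂ i h, chainDet_succ_of_eq c b i h, key]
  ring

theorem torsion_eq_det_zpow_mul (hcc : IsChainComplex d) (hac : IsAcyclic d)
    (hb : IsTorsionChoice d b) (hb₂ : IsTorsionChoice d b₂) (N : ℕ) :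
    torsion c d b₂ N =
      (rangeBasis hb N).det (rangeBasis hb₂ N) ^ ((-1 : ℤ) ^ (N + 1)) * torsion c d b N :=
  prod_range_zpow_neg_one_pow_telescope (fun i => ((rangeBasis hb i).isUnit_det _).ne_zero)
    (chainDet_zero_eq_det_mul c hac hb hb₂) (chainDet_succ_eq_det_mul c hcc hac hb hb₂) N

theorem torsion_eq_of_rank_eq_zero (hcc : IsChainComplex d) (hac : IsAcyclic d)
    (hb : IsTorsionChoice d b) (hb₂ : IsTorsionChoice d b₂) {N : ℕ} (hN : r N = 0) :
    torsion c d b₂ N = torsion c d b N := by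
  have : IsEmpty (Fin (r N)) := by rw [hN]; infer_instance
  rw [torsion_eq_det_zpow_mul c hcc hac hb hb₂ N, Basis.det_isEmpty]
  simp

end Torsion

section ShortExact

variable {M' M M'' : ℕ → Type}
  [∀ i, AddCommGroup (M' i)] [∀ i, Module F (M' i)]
  [∀ i, AddCommGroup (M i)] [∀ i, Module F (M i)]
  [∀ i, AddCommGroup (M'' i)] [∀ i, Module F (M'' i)]
  {k' k k'' r' r r'' : ℕ → ℕ}

def liftChoice (f : ∀ i, M' i →ₗ[F] M i) (s : ∀ i, M'' i →ₗ[F] M i)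
    (b' : ∀ i, Fin (r' i) → M' (i + 1)) (b'' : ∀ i, Fin (r'' i) → M'' (i + 1)) (i : ℕ) :
    Fin (r' i) ⊕ Fin (r'' i) → M (i + 1) :=
  Sum.elim (f (i + 1) ∘ b' i) (s (i + 1) ∘ b'' i)

variable {d' : ∀ i, M' (i + 1) →ₗ[F] M' i} {d : ∀ i, M (i + 1) →ₗ[F] M i}
  {d'' : ∀ i, M'' (i + 1) →ₗ[F] M'' i} {f : ∀ i, M' i →ₗ[F] M i} {g : ∀ i, M i →ₗ[F] M'' i}
  {s : ∀ i, M'' i →ₗ[F] M i} {b' : ∀ i, Fin (r' i) → M' (i + 1)}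
  {b'' : ∀ i, Fin (r'' i) → M'' (i + 1)}
  (c' : ∀ i, Basis (Fin (k' i)) F (M' i)) (c : ∀ i, Basis (Fin (k i)) F (M i))
  (c'' : ∀ i, Basis (Fin (k'' i)) F (M'' i))

theorem g_d_section_apply (hg : ∀ i, (g i).comp (d i) = (d'' i).comp (g (i + 1)))
    (hs : ∀ i, (g i).comp (s i) = LinearMap.id) (i : ℕ) (y : M'' (i + 1)) :
    g i (d i (s (i + 1) y)) = d'' i y := by
  rw [← LinearMap.comp_apply, hg i, LinearMap.comp_apply, ← LinearMap.comp_apply (g _), hs,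
    LinearMap.id_apply]

theorem d_comp_liftChoice (hf : ∀ i, (f i).comp (d' i) = (d i).comp (f (i + 1))) (i : ℕ) :
    d i ∘ liftChoice f s b' b'' i = Sum.elim (f i ∘ d' i ∘ b' i) (d i ∘ s (i + 1) ∘ b'' i) := by
  ext (x | x)
  · exact (LinearMap.congr_fun (hf i) (b' i x)).symm
  · rfl

theorem mem_range_of_map_mem_range (hcc : IsChainComplex d)
    (hf : ∀ i, (f i).comp (d' i) = (d i).comp (f (i + 1)))
    (hg : ∀ i, (g i).comp (d i) = (d'' i).comp (g (i + 1)))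
    (hinj : ∀ i, Function.Injective (f i))
    (hex : ∀ i, LinearMap.range (f i) = LinearMap.ker (g i))
    (hsurj : ∀ i, Function.Surjective (g i)) (hac'' : IsAcyclic d'') {i : ℕ} {p : M' i}
    (hp : f i p ∈ LinearMap.range (d i)) : p ∈ LinearMap.range (d' i) := by
  obtain ⟨w, hw⟩ := hp
  have hgw : g (i + 1) w ∈ LinearMap.ker (d'' i) := by
    rw [LinearMap.mem_ker, ← LinearMap.comp_apply, ← hg i, LinearMap.comp_apply, hw,
      ← LinearMap.comp_apply, LinearMap.range_le_ker_iff.mp (hex i).le, LinearMap.zero_apply]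
  rw [hac''.2 i] at hgw
  obtain ⟨z'', hz''⟩ := hgw
  obtain ⟨z, rfl⟩ := hsurj (i + 2) z''
  have hq : w - d (i + 1) z ∈ LinearMap.range (f (i + 1)) := by
    rw [hex (i + 1), LinearMap.mem_ker, map_sub, ← LinearMap.comp_apply, hg (i + 1),
      LinearMap.comp_apply, hz'', sub_self]
  obtain ⟨q, hq⟩ := hq
  refine ⟨q, hinj i ?_⟩
  rw [← LinearMap.comp_apply, hf i, LinearMap.comp_apply, hq, map_sub, ← hw, sub_eq_self,
    ← LinearMap.comp_apply, hcc i, LinearMap.zero_apply]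

theorem linearIndependent_d_liftChoice (hf : ∀ i, (f i).comp (d' i) = (d i).comp (f (i + 1)))
    (hg : ∀ i, (g i).comp (d i) = (d'' i).comp (g (i + 1)))
    (hinj : ∀ i, Function.Injective (f i))
    (hex : ∀ i, LinearMap.range (f i) = LinearMap.ker (g i))
    (hs : ∀ i, (g i).comp (s i) = LinearMap.id) (hb' : IsTorsionChoice d' b')
    (hb'' : IsTorsionChoice d'' b'') (i : ℕ) :
    LinearIndependent F (d i ∘ liftChoice f s b' b'' i) := by
  rw [d_comp_liftChoice hf]
  refine linearIndependent_sumElim_of_comp_eq_zero (LinearMap.range_le_ker_iff.mp (hex i).le)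
    (hinj i) (hb' i).1 ?_
  have hgw : g i ∘ d i ∘ s (i + 1) ∘ b'' i = d'' i ∘ b'' i :=
    funext fun x => g_d_section_apply hg hs i (b'' i x)
  exact hgw ▸ (hb'' i).1

theorem span_d_liftChoice (hcc : IsChainComplex d)
    (hf : ∀ i, (f i).comp (d' i) = (d i).comp (f (i + 1)))
    (hg : ∀ i, (g i).comp (d i) = (d'' i).comp (g (i + 1)))
    (hinj : ∀ i, Function.Injective (f i))
    (hex : ∀ i, LinearMap.range (f i) = LinearMap.ker (g i))
    (hsurj : ∀ i, Function.Surjective (g i)) (hs : ∀ i, (g i).comp (s i) = LinearMap.id)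
    (hac'' : IsAcyclic d'') (hb' : IsTorsionChoice d' b') (hb'' : IsTorsionChoice d'' b'')
    (i : ℕ) :
    Submodule.span F (Set.range (d i ∘ liftChoice f s b' b'' i)) = LinearMap.range (d i) := by
  refine le_antisymm (Submodule.span_le.mpr (Set.range_comp_subset_range _ _)) ?_
  rw [d_comp_liftChoice hf, Set.Sum.elim_range, Submodule.span_union]
  have hS' : (LinearMap.range (d' i)).map (f i) =
      Submodule.span F (Set.range (f i ∘ d' i ∘ b' i)) := by
    rw [← (hb' i).2, Submodule.map_span, ← Set.range_comp]
    rfl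
  set T := Submodule.span F (Set.range (d i ∘ s (i + 1) ∘ b'' i))
  have hgT : T.map (g i) = LinearMap.range (d'' i) := by
    rw [Submodule.map_span, ← Set.range_comp, ← (hb'' i).2]
    exact congrArg _ (congrArg _ (funext fun x => g_d_section_apply hg hs i (b'' i x)))
  rintro _ ⟨w, rfl⟩
  obtain ⟨z, hzT, hz⟩ : g i (d i w) ∈ T.map (g i) := by
    rw [hgT, ← LinearMap.comp_apply, hg i]
    exact LinearMap.mem_range_self _ _
  obtain ⟨p, hp⟩ : d i w - z ∈ LinearMap.range (f i) := by
    rw [hex i, LinearMap.mem_ker, map_sub, hz, sub_self]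
  have hpd : p ∈ LinearMap.range (d' i) := by
    refine mem_range_of_map_mem_range hcc hf hg hinj hex hsurj hac'' (hp ▸ ?_)
    exact Submodule.sub_mem _ (LinearMap.mem_range_self _ _)
      (Submodule.span_le.mpr (Set.range_comp_subset_range _ _) hzT)
  rw [← sub_add_cancel (d i w) z, ← hp, ← hS']
  exact Submodule.add_mem_sup ⟨p, hpd, rfl⟩ hzT

theorem IsTorsionChoice.rank_add (hcc : IsChainComplex d)
    (hf : ∀ i, (f i).comp (d' i) = (d i).comp (f (i + 1)))
    (hg : ∀ i, (g i).comp (d i) = (d'' i).comp (g (i + 1)))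
    (hinj : ∀ i, Function.Injective (f i))
    (hex : ∀ i, LinearMap.range (f i) = LinearMap.ker (g i))
    (hsurj : ∀ i, Function.Surjective (g i)) (hs : ∀ i, (g i).comp (s i) = LinearMap.id)
    (hac'' : IsAcyclic d'') {b : ∀ i, Fin (r i) → M (i + 1)} (hb : IsTorsionChoice d b)
    (hb' : IsTorsionChoice d' b') (hb'' : IsTorsionChoice d'' b'') (i : ℕ) :
    r' i + r'' i = r i := by
  rw [← hb.finrank_range, ← span_d_liftChoice hcc hf hg hinj hex hsurj hs hac'' hb' hb'',
    finrank_span_eq_card (linearIndependent_d_liftChoice hf hg hinj hex hs hb' hb'' i),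
    Fintype.card_sum, Fintype.card_fin, Fintype.card_fin]

theorem isTorsionChoice_liftChoice_comp (hcc : IsChainComplex d)
    (hf : ∀ i, (f i).comp (d' i) = (d i).comp (f (i + 1)))
    (hg : ∀ i, (g i).comp (d i) = (d'' i).comp (g (i + 1)))
    (hinj : ∀ i, Function.Injective (f i))
    (hex : ∀ i, LinearMap.range (f i) = LinearMap.ker (g i))
    (hsurj : ∀ i, Function.Surjective (g i)) (hs : ∀ i, (g i).comp (s i) = LinearMap.id)
    (hac'' : IsAcyclic d'') (hb' : IsTorsionChoice d' b') (hb'' : IsTorsionChoice d'' b'')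
    (σ : ∀ i, Fin (r i) ≃ Fin (r' i) ⊕ Fin (r'' i)) :
    IsTorsionChoice d fun i => liftChoice f s b' b'' i ∘ σ i := fun i =>
  ⟨(linearIndependent_d_liftChoice hf hg hinj hex hs hb' hb'' i).comp _ (σ i).injective, by
    rw [← span_d_liftChoice hcc hf hg hinj hex hsurj hs hac'' hb' hb'' i]
    exact congrArg _ ((σ i).surjective.range_comp (d i ∘ liftChoice f s b' b'' i))⟩

theorem chainDet_liftChoice_zero (hf : ∀ i, (f i).comp (d' i) = (d i).comp (f (i + 1)))
    (hg : ∀ i, (g i).comp (d i) = (d'' i).comp (g (i + 1)))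
    (hinj : ∀ i, Function.Injective (f i))
    (hex : ∀ i, LinearMap.range (f i) = LinearMap.ker (g i))
    (hs : ∀ i, (g i).comp (s i) = LinearMap.id) (hsum : ∀ i, k' i + k'' i = k i)
    (hcompat : ∀ i, ((c i).det fun j =>
        Sum.elim (fun x => f i (c' i x)) (fun y => s i (c'' i y))
          (finSumFinEquiv.symm (Fin.cast (hsum i).symm j))) = 1)
    (σ : ∀ i, Fin (r i) ≃ Fin (r' i) ⊕ Fin (r'' i))
    (h : r 0 = k 0) (h' : r' 0 = k' 0) (h'' : r'' 0 = k'' 0) :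
    EqUpToSign (chainDet c d (fun i => liftChoice f s b' b'' i ∘ σ i) 0)
      (chainDet c' d' b' 0 * chainDet c'' d'' b'' 0) := by
  rw [chainDet_zero_of_eq c _ h, chainDet_zero_of_eq c' b' h', chainDet_zero_of_eq c'' b'' h'']
  have hgw : g 0 ∘ ((d 0 ∘ s 1 ∘ b'' 0) ∘ finCongr h''.symm) =
      (d'' 0 ∘ b'' 0) ∘ finCongr h''.symm :=
    funext fun x => g_d_section_apply hg hs 0 _
  rw [← hgw]
  refine (c 0).det_eqUpToSign_mul_of_section (LinearMap.range_le_ker_iff.mp (hex 0).le) (hinj 0)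
    (hs 0) (c' 0) (c'' 0) ((finCongr (hsum 0).symm).trans finSumFinEquiv.symm) (hcompat 0) _
    (finCongr h.symm)
    (((finCongr h'.symm).sumCongr (finCongr h''.symm)).trans (σ 0).symm) _ _ ?_
  ext (x | x)
  · simpa [liftChoice] using (LinearMap.congr_fun (hf 0) _).symm
  · simp [liftChoice]

theorem chainDet_liftChoice_succ (hf : ∀ i, (f i).comp (d' i) = (d i).comp (f (i + 1)))
    (hg : ∀ i, (g i).comp (d i) = (d'' i).comp (g (i + 1)))
    (hinj : ∀ i, Function.Injective (f i))
    (hex : ∀ i, LinearMap.range (f i) = LinearMap.ker (g i))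
    (hs : ∀ i, (g i).comp (s i) = LinearMap.id) (hsum : ∀ i, k' i + k'' i = k i)
    (hcompat : ∀ i, ((c i).det fun j =>
        Sum.elim (fun x => f i (c' i x)) (fun y => s i (c'' i y))
          (finSumFinEquiv.symm (Fin.cast (hsum i).symm j))) = 1)
    (σ : ∀ i, Fin (r i) ≃ Fin (r' i) ⊕ Fin (r'' i)) (i : ℕ)
    (h : r (i + 1) + r i = k (i + 1)) (h' : r' (i + 1) + r' i = k' (i + 1))
    (h'' : r'' (i + 1) + r'' i = k'' (i + 1)) :
    EqUpToSign (chainDet c d (fun i => liftChoice f s b' b'' i ∘ σ i) (i + 1))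
      (chainDet c' d' b' (i + 1) * chainDet c'' d'' b'' (i + 1)) := by
  rw [chainDet_succ_of_eq c _ i h, chainDet_succ_of_eq c' b' i h',
    chainDet_succ_of_eq c'' b'' i h'']
  set e' := (finCongr h'.symm).trans finSumFinEquiv.symm
  set e'' := (finCongr h''.symm).trans finSumFinEquiv.symm
  have hgw :
      g (i + 1) ∘ (Sum.elim (d (i + 1) ∘ s (i + 2) ∘ b'' (i + 1)) (s (i + 1) ∘ b'' i) ∘ e'') =
      Sum.elim (d'' (i + 1) ∘ b'' (i + 1)) (b'' i) ∘ e'' := by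
    ext x
    rcases hx : e'' x with a | a
    · simpa [hx] using g_d_section_apply hg hs (i + 1) (b'' (i + 1) a)
    · simpa [hx] using LinearMap.congr_fun (hs (i + 1)) (b'' i a)
  rw [← hgw]
  refine (c (i + 1)).det_eqUpToSign_mul_of_section
    (LinearMap.range_le_ker_iff.mp (hex (i + 1)).le) (hinj (i + 1)) (hs (i + 1)) (c' (i + 1))
    (c'' (i + 1)) ((finCongr (hsum (i + 1)).symm).trans finSumFinEquiv.symm) (hcompat (i + 1)) _
    ((finCongr h.symm).trans finSumFinEquiv.symm)
    ((e'.sumCongr e'').trans ((Equiv.sumSumSumComm _ _ _ _).trans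
      ((σ (i + 1)).symm.sumCongr (σ i).symm))) _ _ ?_
  ext (x | x)
  · rcases hx : e' x with a | a
    · simpa [liftChoice, hx] using (LinearMap.congr_fun (hf (i + 1)) _).symm
    · simp [liftChoice, hx]
  · rcases hx : e'' x with a | a <;> simp [liftChoice, hx]

theorem torsion_liftChoice_eqUpToSign (hf : ∀ i, (f i).comp (d' i) = (d i).comp (f (i + 1)))
    (hg : ∀ i, (g i).comp (d i) = (d'' i).comp (g (i + 1)))
    (hinj : ∀ i, Function.Injective (f i))
    (hex : ∀ i, LinearMap.range (f i) = LinearMap.ker (g i))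
    (hs : ∀ i, (g i).comp (s i) = LinearMap.id) (hsum : ∀ i, k' i + k'' i = k i)
    (hcompat : ∀ i, ((c i).det fun j =>
        Sum.elim (fun x => f i (c' i x)) (fun y => s i (c'' i y))
          (finSumFinEquiv.symm (Fin.cast (hsum i).symm j))) = 1)
    (hac' : IsAcyclic d') (hac : IsAcyclic d) (hac'' : IsAcyclic d'')
    (σ : ∀ i, Fin (r i) ≃ Fin (r' i) ⊕ Fin (r'' i))
    (hb : IsTorsionChoice d fun i => liftChoice f s b' b'' i ∘ σ i)
    (hb' : IsTorsionChoice d' b') (hb'' : IsTorsionChoice d'' b'') (N : ℕ) :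
    EqUpToSign (torsion c d (fun i => liftChoice f s b' b'' i ∘ σ i) N)
      (torsion c' d' b' N * torsion c'' d'' b'' N) := by
  rw [torsion, torsion, torsion, ← Finset.prod_mul_distrib]
  refine EqUpToSign.prod _ fun i _ => ?_
  rw [← mul_zpow]
  refine EqUpToSign.zpow ?_ _
  cases i with
  | zero =>
    exact chainDet_liftChoice_zero c' c c'' hf hg hinj hex hs hsum hcompat σ
      (hac.rank_zero_eq hb c) (hac'.rank_zero_eq hb' c') (hac''.rank_zero_eq hb'' c'')
  | succ i =>
    exact chainDet_liftChoice_succ c' c c'' hf hg hinj hex hs hsum hcompat σ i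
      (hac.rank_succ_eq hb c i) (hac'.rank_succ_eq hb' c' i) (hac''.rank_succ_eq hb'' c'' i)

end ShortExact

theorem stmt11_general {M' M M'' : ℕ → Type}
    [∀ i, AddCommGroup (M' i)] [∀ i, Module F (M' i)]
    [∀ i, AddCommGroup (M i)] [∀ i, Module F (M i)]
    [∀ i, AddCommGroup (M'' i)] [∀ i, Module F (M'' i)]
    {k' k k'' r' r r'' : ℕ → ℕ}
    (c' : ∀ i, Module.Basis (Fin (k' i)) F (M' i)) (c : ∀ i, Module.Basis (Fin (k i)) F (M i))
    (c'' : ∀ i, Module.Basis (Fin (k'' i)) F (M'' i))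
    (d' : ∀ i, M' (i + 1) →ₗ[F] M' i) (d : ∀ i, M (i + 1) →ₗ[F] M i)
    (d'' : ∀ i, M'' (i + 1) →ₗ[F] M'' i)
    (N : ℕ) (hdim : ∀ i, N < i → k i = 0)
    (hcc : IsChainComplex d)
    -- the chain maps of the short exact sequence
    (f : ∀ i, M' i →ₗ[F] M i) (g : ∀ i, M i →ₗ[F] M'' i)
    (hf : ∀ i, (f i).comp (d' i) = (d i).comp (f (i + 1)))
    (hg : ∀ i, (g i).comp (d i) = (d'' i).comp (g (i + 1)))
    (hinj : ∀ i, Function.Injective (f i))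
    (hex : ∀ i, LinearMap.range (f i) = LinearMap.ker (g i))
    (hsurj : ∀ i, Function.Surjective (g i))
    -- compatible bases, via sections of `g`
    (s : ∀ i, M'' i →ₗ[F] M i)
    (hs : ∀ i, (g i).comp (s i) = LinearMap.id)
    (hsum : ∀ i, k' i + k'' i = k i)
    (hcompat : ∀ i, ((c i).det fun j =>
        Sum.elim (fun x => f i (c' i x)) (fun y => s i (c'' i y))
          (finSumFinEquiv.symm (Fin.cast (hsum i).symm j))) = 1)
    -- acyclicity and choices of the auxiliary vectors
    (hac' : IsAcyclic d') (hac : IsAcyclic d) (hac'' : IsAcyclic d'')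
    (b' : ∀ i, Fin (r' i) → M' (i + 1)) (b : ∀ i, Fin (r i) → M (i + 1))
    (b'' : ∀ i, Fin (r'' i) → M'' (i + 1))
    (hb' : IsTorsionChoice d' b') (hb : IsTorsionChoice d b)
    (hb'' : IsTorsionChoice d'' b'') :
    torsion c d b N = torsion c' d' b' N * torsion c'' d'' b'' N ∨
      torsion c d b N = -(torsion c' d' b' N * torsion c'' d'' b'' N) := by
  have hr := hb.rank_add hcc hf hg hinj hex hsurj hs hac'' hb' hb''
  let σ i : Fin (r i) ≃ Fin (r' i) ⊕ Fin (r'' i) :=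
    (finCongr (hr i).symm).trans finSumFinEquiv.symm
  have hbL := isTorsionChoice_liftChoice_comp hcc hf hg hinj hex hsurj hs hac'' hb' hb'' σ
  have hrN : r N = 0 := by
    have := hac.rank_succ_eq hb c N
    have := hdim (N + 1) N.lt_succ_self
    omega
  rw [torsion_eq_of_rank_eq_zero c hcc hac hbL hb hrN]
  exact torsion_liftChoice_eqUpToSign c' c c'' hf hg hinj hex hs hsum hcompat hac' hac hac'' σ
    hbL hb' hb'' N

/-- Multiplicativity of Reidemeister torsion (Lemma 6.2, acyclic case). Let
`0 → C' →^{f} C →^{g} C'' → 0` be a short exact sequence of based chain complexes of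
finite-dimensional vector spaces with compatible bases (for each degree `i` there is a
section `s i` of `g i` such that the isomorphism `C'_i ⊕ C''_i → C_i` given by
`f i ⊕ s i` has determinant `1` in the given bases).  If all three complexes are
acyclic, then `Tor(C) = Tor(C') ⬝ Tor(C'')` up to sign. -/
theorem stmt11 {M' M M'' : ℕ → Type}
    [∀ i, AddCommGroup (M' i)] [∀ i, Module F (M' i)] [∀ i, FiniteDimensional F (M' i)]
    [∀ i, AddCommGroup (M i)] [∀ i, Module F (M i)] [∀ i, FiniteDimensional F (M i)]
    [∀ i, AddCommGroup (M'' i)] [∀ i, Module F (M'' i)] [∀ i, FiniteDimensional F (M'' i)]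
    {k' k k'' r' r r'' : ℕ → ℕ}
    (c' : ∀ i, Module.Basis (Fin (k' i)) F (M' i)) (c : ∀ i, Module.Basis (Fin (k i)) F (M i))
    (c'' : ∀ i, Module.Basis (Fin (k'' i)) F (M'' i))
    (d' : ∀ i, M' (i + 1) →ₗ[F] M' i) (d : ∀ i, M (i + 1) →ₗ[F] M i)
    (d'' : ∀ i, M'' (i + 1) →ₗ[F] M'' i)
    (N : ℕ) (hdim : ∀ i, N < i → k i = 0)
    (hcc' : IsChainComplex d') (hcc : IsChainComplex d) (hcc'' : IsChainComplex d'')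
    -- the chain maps of the short exact sequence
    (f : ∀ i, M' i →ₗ[F] M i) (g : ∀ i, M i →ₗ[F] M'' i)
    (hf : ∀ i, (f i).comp (d' i) = (d i).comp (f (i + 1)))
    (hg : ∀ i, (g i).comp (d i) = (d'' i).comp (g (i + 1)))
    (hinj : ∀ i, Function.Injective (f i))
    (hex : ∀ i, LinearMap.range (f i) = LinearMap.ker (g i))
    (hsurj : ∀ i, Function.Surjective (g i))
    -- compatible bases, via sections of `g`
    (s : ∀ i, M'' i →ₗ[F] M i)
    (hs : ∀ i, (g i).comp (s i) = LinearMap.id)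
    (hsum : ∀ i, k' i + k'' i = k i)
    (hcompat : ∀ i, ((c i).det fun j =>
        Sum.elim (fun x => f i (c' i x)) (fun y => s i (c'' i y))
          (finSumFinEquiv.symm (Fin.cast (hsum i).symm j))) = 1)
    -- acyclicity and choices of the auxiliary vectors
    (hac' : IsAcyclic d') (hac : IsAcyclic d) (hac'' : IsAcyclic d'')
    (b' : ∀ i, Fin (r' i) → M' (i + 1)) (b : ∀ i, Fin (r i) → M (i + 1))
    (b'' : ∀ i, Fin (r'' i) → M'' (i + 1))
    (hb' : IsTorsionChoice d' b') (hb : IsTorsionChoice d b)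
    (hb'' : IsTorsionChoice d'' b'') :
    torsion c d b N = torsion c' d' b' N * torsion c'' d'' b'' N ∨
      torsion c d b N = -(torsion c' d' b' N * torsion c'' d'' b'' N) :=
  stmt11_general c' c c'' d' d d'' N hdim hcc f g hf hg hinj hex hsurj s hs hsum hcompat hac' hac
    hac'' b' b b'' hb' hb hb''
end

section
/- Let α = 1, β = 1 and γ = −1 ± i (i.e., v = γ + 2 satisfies the defining equation). Then the matrices a ↦ [[1,1],[0,1]], b ↦ [[1,0],[−1±i,1]] satisfy the Whitehead link relation a·w = w·a where w = b·a·b⁻¹·a⁻¹·b⁻¹·a·b in SL(2,ℂ). -/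
/-- For `γ = -1 ± i`, the matrices `a = [[1,1],[0,1]]` and `b = [[1,0],[γ,1]]` satisfy
the Whitehead link relation `a w = w a`, where `w = b a b⁻¹ a⁻¹ b⁻¹ a b` in `SL(2,ℂ)`. -/
theorem stmt18 (s : ℂ) (hs : s = Complex.I ∨ s = -Complex.I)
    (a b : Matrix (Fin 2) (Fin 2) ℂ)
    (ha : a = !![1, 1; 0, 1]) (hb : b = !![1, 0; -1 + s, 1]) :
    a * (b * a * b⁻¹ * a⁻¹ * b⁻¹ * a * b) = (b * a * b⁻¹ * a⁻¹ * b⁻¹ * a * b) * a := by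
  have hs2 : s ^ 2 = -1 := by
    rcases hs with h | h <;> rw [h] <;> ring_nf <;> simp [Complex.I_sq]
  have hai : a⁻¹ = !![1, -1; 0, 1] := by
    rw [ha, Matrix.inv_def, Matrix.adjugate_fin_two, Matrix.det_fin_two_of]
    norm_num
  have hbi : b⁻¹ = !![1, 0; 1 - s, 1] := by
    rw [hb, Matrix.inv_def, Matrix.adjugate_fin_two, Matrix.det_fin_two_of]
    norm_num
    ring_nf
  rw [hai, hbi, ha, hb]
  ext i j
  fin_cases i <;> fin_cases j <;>
    simp [Matrix.mul_apply, Fin.sum_univ_succ] <;> ring_nf <;>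
    linear_combination (-s^2 + 2*s - 1) * hs2
end
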